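/- Let n ≥ 1, p ∈ [2, ∞), and M_count the n × n lower triangular all-ones matrix. Then γ_(p)(M_count) ≥ n^{1/p - 1} ‖M_count‖_{S₁}, where ‖M_count‖_{S₁} = (1/2) ∑_{i=1}^{n} |csc((2i-1)π/(4n+2))| is the Schatten-1 (nuclear) norm of M_count. -/

import Mathlib

open Complex Finset
noncomputable def colNorm {ι κ 𝕜 : Type*} [Fintype ι] [SeminormedAddCommGroup 𝕜]
    (C : Matrix ι κ 𝕜) : ℝ :=
  ⨆ j, Real.sqrt (∑ i, ‖C i j‖ ^ 2)

/-- The generalized `p`-trace `Tr_p(B) = (∑ i ((B Bᴴ)[i,i])^{p/2})^{1/p}`. -/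
noncomputable def trp {n m : ℕ} (p : ℝ) (B : Matrix (Fin n) (Fin m) ℂ) : ℝ :=
  (∑ i, ((B * B.conjTranspose) i i).re ^ (p / 2)) ^ (1 / p)

/-- The γ_(p) factorization norm. -/
noncomputable def gammap {n : ℕ} (p : ℝ) (M : Matrix (Fin n) (Fin n) ℂ) : ℝ :=
  sInf {r : ℝ | ∃ m : ℕ, ∃ B : Matrix (Fin n) (Fin m) ℂ, ∃ C : Matrix (Fin m) (Fin n) ℂ,
    B * C = M ∧ r = trp p B * colNorm C}

section Aux
open Matrix

noncomputable def hh (n : ℕ) : ℝ := Real.pi / (2*(2*(n:ℝ)+1))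


lemma tele (c : ℝ) (m : ℕ) :
    ∑ j ∈ Finset.range m, 2 * Real.sin c * Real.cos ((2*(j:ℝ)+1)*c) = Real.sin (2*m*c) := by
  induction m with
  | zero => simp
  | succ m ih =>
    rw [Finset.sum_range_succ, ih]
    have : Real.sin (2*(m+1:ℕ)*c) - Real.sin (2*m*c)
        = 2 * Real.sin c * Real.cos ((2*(m:ℝ)+1)*c) := by
      rw [Real.sin_sub_sin]
      push_cast
      ring_nf
    push_cast at this ⊢
    linarith

lemma cos_sum (n : ℕ) (m : ℤ) (hm2 : m.natAbs ≤ 2*n) :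
    ∑ k ∈ Finset.range n, Real.cos ((2*(k:ℝ)+1) * ((m:ℝ) * Real.pi / (2*(n:ℝ)+1)))
      = if m = 0 then (n:ℝ) else -(-1:ℝ)^m / 2 := by
  rcases eq_or_ne m 0 with rfl | hm
  · simp
  · rw [if_neg hm]
    set c : ℝ := (m:ℝ) * Real.pi / (2*(n:ℝ)+1) with hc
    have hden : (2*(n:ℝ)+1) ≠ 0 := by positivity
    have hπ : (Real.pi) ≠ 0 := Real.pi_ne_zero
    have hsin : Real.sin c ≠ 0 := by
      intro h
      rcases Real.sin_eq_zero_iff.1 h with ⟨l, hl⟩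
      rw [hc] at hl
      have h2 : ((l * (2*(n:ℤ)+1) : ℤ) : ℝ) * Real.pi = ((m:ℤ):ℝ) * Real.pi := by
        push_cast
        field_simp at hl
        rw [hl]
      have h3 : l * (2*(n:ℤ)+1) = m := by
        have := mul_right_cancel₀ hπ h2
        exact_mod_cast this
      have hl0 : l ≠ 0 := by rintro rfl; simp at h3; omega
      have h4 : m.natAbs = l.natAbs * (2*n+1) := by
        rw [← h3, Int.natAbs_mul]
        congr 1
      have h5 : 1 ≤ l.natAbs := Nat.one_le_iff_ne_zero.2 (Int.natAbs_ne_zero.2 hl0)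
      nlinarith [h4, h5, hm2]
    have ht := tele c n
    rw [← Finset.mul_sum] at ht
    have h2nc : 2*(n:ℝ)*c = (m:ℤ) * Real.pi - c := by
      rw [hc]; field_simp; ring
    rw [h2nc, Real.sin_int_mul_pi_sub] at ht
    have : ∑ k ∈ Finset.range n, Real.cos ((2*(k:ℝ)+1) * c)
        = -((-1:ℝ)^m * Real.sin c) / (2 * Real.sin c) := by
      rw [eq_div_iff (mul_ne_zero two_ne_zero hsin)]
      linear_combination ht
    rw [this]
    field_simp



lemma prod_sin (A B : ℝ) : Real.sin A * Real.sin B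
    = (Real.cos (A-B) - Real.cos (A+B))/2 := by
  rw [Real.cos_sub, Real.cos_add]; ring

lemma prod_cos (A B : ℝ) : Real.cos A * Real.cos B
    = (Real.cos (A-B) + Real.cos (A+B))/2 := by
  rw [Real.cos_sub, Real.cos_add]; ring


lemma neg_one_zpow_even {m : ℤ} (h : Even m) : ((-1:ℝ))^m = 1 := h.neg_one_zpow

lemma UUt (n : ℕ) (i j : Fin n) :
    ∑ k : Fin n, Real.sin ((2*(i:ℕ)+2) * ((2*(k:ℕ)+1) * hh n)) *
        Real.sin ((2*(j:ℕ)+2) * ((2*(k:ℕ)+1) * hh n))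
      = if i = j then (2*(n:ℝ)+1)/4 else 0 := by
  have hden : (2*(n:ℝ)+1) ≠ 0 := by positivity
  set m1 : ℤ := (i:ℤ) - (j:ℤ) with hm1
  set m2 : ℤ := (i:ℤ) + (j:ℤ) + 2 with hm2
  have key : ∀ k : ℕ, Real.sin ((2*(i:ℕ)+2) * ((2*(k:ℕ)+1) * hh n)) *
        Real.sin ((2*(j:ℕ)+2) * ((2*(k:ℕ)+1) * hh n))
      = (Real.cos ((2*(k:ℝ)+1) * ((m1:ℝ) * Real.pi / (2*(n:ℝ)+1)))
         - Real.cos ((2*(k:ℝ)+1) * ((m2:ℝ) * Real.pi / (2*(n:ℝ)+1))))/2 := by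
    intro k
    rw [prod_sin]
    have e1 : (2*(i:ℕ)+2) * ((2*(k:ℕ)+1) * hh n) - (2*(j:ℕ)+2) * ((2*(k:ℕ)+1) * hh n)
        = (2*(k:ℝ)+1) * ((m1:ℝ) * Real.pi / (2*(n:ℝ)+1)) := by
      unfold hh; simp only [hm1, hm2]; push_cast; field_simp; ring
    have e2 : (2*(i:ℕ)+2) * ((2*(k:ℕ)+1) * hh n) + (2*(j:ℕ)+2) * ((2*(k:ℕ)+1) * hh n)
        = (2*(k:ℝ)+1) * ((m2:ℝ) * Real.pi / (2*(n:ℝ)+1)) := by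
      unfold hh; simp only [hm1, hm2]; push_cast; field_simp; ring
    rw [e1, e2]
  have hsum : ∑ k : Fin n, Real.sin ((2*(i:ℕ)+2) * ((2*(k:ℕ)+1) * hh n)) *
        Real.sin ((2*(j:ℕ)+2) * ((2*(k:ℕ)+1) * hh n))
      = ((∑ k ∈ Finset.range n, Real.cos ((2*(k:ℝ)+1) * ((m1:ℝ) * Real.pi / (2*(n:ℝ)+1))))
        - (∑ k ∈ Finset.range n, Real.cos ((2*(k:ℝ)+1) * ((m2:ℝ) * Real.pi / (2*(n:ℝ)+1)))))/2 := by
    rw [← Finset.sum_sub_distrib, Finset.sum_div]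
    rw [Fin.sum_univ_eq_sum_range (fun k => Real.sin ((2*(i:ℕ)+2) * ((2*(k:ℕ)+1) * hh n)) *
        Real.sin ((2*(j:ℕ)+2) * ((2*(k:ℕ)+1) * hh n)))]
    exact Finset.sum_congr rfl (fun k _ => key k)
  rw [hsum, cos_sum n m1 (by omega), cos_sum n m2 (by omega)]
  have hi : (i:ℕ) < n := i.isLt
  have hj : (j:ℕ) < n := j.isLt
  have hm2ne : m2 ≠ 0 := by omega
  rcases eq_or_ne i j with rfl | hij
  · rw [if_pos rfl, if_pos (by omega), if_neg hm2ne]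
    have : ((-1:ℝ))^m2 = 1 := neg_one_zpow_even (m := m2) ⟨(i:ℤ)+1, by rw [hm2]; ring⟩
    rw [this]; ring
  · have hm1ne : m1 ≠ 0 := by
      simp only [hm1, sub_ne_zero]
      exact_mod_cast fun h => hij (Fin.ext (by exact_mod_cast h))
    rw [if_neg hij, if_neg hm1ne, if_neg hm2ne]
    have : ((-1:ℝ))^m2 = ((-1:ℝ))^m1 := by
      have : m2 = m1 + 2*((j:ℤ)+1) := by rw [hm1, hm2]; ring
      rw [this, zpow_add₀ (by norm_num : (-1:ℝ) ≠ 0)]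
      rw [neg_one_zpow_even (m := 2*((j:ℤ)+1)) ⟨(j:ℤ)+1, by ring⟩]; ring
    rw [this]; ring



lemma neg_one_zpow_odd {m : ℤ} (h : Odd m) : ((-1:ℝ))^m = -1 := h.neg_one_zpow

lemma VVt (n : ℕ) (i j : Fin n) :
    ∑ k : Fin n, Real.cos ((2*(i:ℕ)+1) * ((2*(k:ℕ)+1) * hh n)) *
        Real.cos ((2*(j:ℕ)+1) * ((2*(k:ℕ)+1) * hh n))
      = if i = j then (2*(n:ℝ)+1)/4 else 0 := by
  have hden : (2*(n:ℝ)+1) ≠ 0 := by positivity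
  set m1 : ℤ := (i:ℤ) - (j:ℤ) with hm1
  set m2 : ℤ := (i:ℤ) + (j:ℤ) + 1 with hm2
  have key : ∀ k : ℕ, Real.cos ((2*(i:ℕ)+1) * ((2*(k:ℕ)+1) * hh n)) *
        Real.cos ((2*(j:ℕ)+1) * ((2*(k:ℕ)+1) * hh n))
      = (Real.cos ((2*(k:ℝ)+1) * ((m1:ℝ) * Real.pi / (2*(n:ℝ)+1)))
         + Real.cos ((2*(k:ℝ)+1) * ((m2:ℝ) * Real.pi / (2*(n:ℝ)+1))))/2 := by
    intro k
    rw [prod_cos]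
    have e1 : (2*(i:ℕ)+1) * ((2*(k:ℕ)+1) * hh n) - (2*(j:ℕ)+1) * ((2*(k:ℕ)+1) * hh n)
        = (2*(k:ℝ)+1) * ((m1:ℝ) * Real.pi / (2*(n:ℝ)+1)) := by
      unfold hh; simp only [hm1, hm2]; push_cast; field_simp; ring
    have e2 : (2*(i:ℕ)+1) * ((2*(k:ℕ)+1) * hh n) + (2*(j:ℕ)+1) * ((2*(k:ℕ)+1) * hh n)
        = (2*(k:ℝ)+1) * ((m2:ℝ) * Real.pi / (2*(n:ℝ)+1)) := by
      unfold hh; simp only [hm1, hm2]; push_cast; field_simp; ring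
    rw [e1, e2]
  have hsum : ∑ k : Fin n, Real.cos ((2*(i:ℕ)+1) * ((2*(k:ℕ)+1) * hh n)) *
        Real.cos ((2*(j:ℕ)+1) * ((2*(k:ℕ)+1) * hh n))
      = ((∑ k ∈ Finset.range n, Real.cos ((2*(k:ℝ)+1) * ((m1:ℝ) * Real.pi / (2*(n:ℝ)+1))))
        + (∑ k ∈ Finset.range n, Real.cos ((2*(k:ℝ)+1) * ((m2:ℝ) * Real.pi / (2*(n:ℝ)+1)))))/2 := by
    rw [← Finset.sum_add_distrib, Finset.sum_div]
    rw [Fin.sum_univ_eq_sum_range (fun k => Real.cos ((2*(i:ℕ)+1) * ((2*(k:ℕ)+1) * hh n)) *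
        Real.cos ((2*(j:ℕ)+1) * ((2*(k:ℕ)+1) * hh n)))]
    exact Finset.sum_congr rfl (fun k _ => key k)
  rw [hsum, cos_sum n m1 (by omega), cos_sum n m2 (by omega)]
  have hi : (i:ℕ) < n := i.isLt
  have hj : (j:ℕ) < n := j.isLt
  have hm2ne : m2 ≠ 0 := by omega
  rcases eq_or_ne i j with rfl | hij
  · rw [if_pos rfl, if_pos (by omega), if_neg hm2ne]
    have : ((-1:ℝ))^m2 = -1 := neg_one_zpow_odd (m := m2) ⟨(i:ℤ), by rw [hm2]; ring⟩
    rw [this]; ring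
  · have hm1ne : m1 ≠ 0 := by
      simp only [hm1, sub_ne_zero]
      exact_mod_cast fun h => hij (Fin.ext (by exact_mod_cast h))
    rw [if_neg hij, if_neg hm1ne, if_neg hm2ne]
    have : ((-1:ℝ))^m2 = -((-1:ℝ))^m1 := by
      have h12 : m2 = m1 + (2*(j:ℤ)+1) := by rw [hm1, hm2]; ring
      rw [h12, zpow_add₀ (by norm_num : (-1:ℝ) ≠ 0)]
      rw [neg_one_zpow_odd (m := 2*(j:ℤ)+1) ⟨(j:ℤ), by ring⟩]; ring
    rw [this]; ring




lemma tele2 (c : ℝ) (m : ℕ) :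
    ∑ j ∈ Finset.range m, 2 * Real.sin c * Real.cos ((2*(j:ℝ)+2)*c)
      = Real.sin ((2*m+1)*c) - Real.sin c := by
  induction m with
  | zero => simp
  | succ m ih =>
    rw [Finset.sum_range_succ, ih]
    have : Real.sin ((2*(m+1:ℕ)+1)*c) - Real.sin ((2*(m:ℝ)+1)*c)
        = 2 * Real.sin c * Real.cos ((2*(m:ℝ)+2)*c) := by
      rw [Real.sin_sub_sin]; push_cast; ring_nf
    push_cast at this ⊢
    linarith

lemma sinpos (n : ℕ) (k : Fin n) : 0 < Real.sin ((2*(k:ℕ)+1) * hh n) := by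
  have hk : (k:ℕ) < n := k.isLt
  have hpi := Real.pi_pos
  apply Real.sin_pos_of_pos_of_lt_pi
  · unfold hh; positivity
  · unfold hh
    have h1 : (2*(k:ℝ)+1) < 2*(2*(n:ℝ)+1) := by
      nlinarith [(by exact_mod_cast hk : (k:ℝ) < (n:ℝ))]
    calc (2*(k:ℝ)+1) * (Real.pi / (2*(2*(n:ℝ)+1)))
        < (2*(2*(n:ℝ)+1)) * (Real.pi / (2*(2*(n:ℝ)+1))) := by
          apply mul_lt_mul_of_pos_right h1 (by positivity)
      _ = Real.pi := by field_simp

lemma sinpos2 (n : ℕ) (k : Fin n) : 0 < Real.sin ((2*(k:ℕ)+1) * (2 * hh n)) := by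
  have hk : (k:ℕ) < n := k.isLt
  have hpi := Real.pi_pos
  apply Real.sin_pos_of_pos_of_lt_pi
  · unfold hh; positivity
  · unfold hh
    have h1 : (2*(k:ℝ)+1) * (2 * (Real.pi / (2*(2*(n:ℝ)+1)))) = (2*(k:ℝ)+1) * Real.pi / (2*(n:ℝ)+1) := by
      field_simp
    rw [h1, div_lt_iff₀ (by positivity)]
    nlinarith [hpi, (by exact_mod_cast hk : (k:ℝ) < (n:ℝ))]

lemma Ucol (n : ℕ) (k : Fin n) :
    ∑ j : Fin n, Real.sin ((2*(j:ℕ)+2) * ((2*(k:ℕ)+1) * hh n))^2 = (2*(n:ℝ)+1)/4 := by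
  set c : ℝ := (2*(k:ℕ)+1) * hh n with hc
  have hs0 : Real.sin ((2*(k:ℕ)+1) * (2 * hh n)) > 0 := sinpos2 n k
  set c2 : ℝ := (2*(k:ℕ)+1) * (2 * hh n) with hc2
  have key : ∀ j : ℕ, Real.sin ((2*(j:ℝ)+2) * c)^2 = (1 - Real.cos ((2*(j:ℝ)+2)*c2))/2 := by
    intro j
    have : ((2*(j:ℝ)+2)*c2) = 2 * ((2*(j:ℝ)+2) * c) := by rw [hc, hc2]; ring
    rw [this, Real.cos_two_mul']
    nlinarith [Real.sin_sq_add_cos_sq ((2*(j:ℝ)+2) * c)]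
  have h1 : ∑ j : Fin n, Real.sin ((2*(j:ℕ)+2) * c)^2
      = ∑ j ∈ Finset.range n, (1 - Real.cos ((2*(j:ℝ)+2)*c2))/2 := by
    rw [Fin.sum_univ_eq_sum_range (fun j => Real.sin ((2*(j:ℕ)+2) * c)^2)]
    refine Finset.sum_congr rfl (fun j _ => ?_)
    push_cast
    exact key j
  rw [h1]
  have h2 := tele2 c2 n
  have h3 : Real.sin ((2*(n:ℝ)+1)*c2) = 0 := by
    have : (2*(n:ℝ)+1)*c2 = ((2*(k:ℕ)+1) : ℤ) * Real.pi := by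
      rw [hc2]; unfold hh; push_cast; field_simp
    rw [this, Real.sin_int_mul_pi]
  rw [h3] at h2
  rw [← Finset.mul_sum] at h2
  have h4 : ∑ j ∈ Finset.range n, Real.cos ((2*(j:ℝ)+2)*c2) = -1/2 := by
    have h2' : (2 * Real.sin c2) * (∑ j ∈ Finset.range n, Real.cos ((2*(j:ℝ)+2)*c2))
        = (2 * Real.sin c2) * (-1/2) := by linarith [h2]
    exact mul_left_cancel₀ (by positivity) h2'
  rw [← Finset.sum_div, Finset.sum_sub_distrib, h4]
  simp only [Finset.sum_const, Finset.card_range, nsmul_eq_mul, mul_one]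
  ring



noncomputable def Umat (n : ℕ) : Matrix (Fin n) (Fin n) ℝ :=
  Matrix.of fun j k => Real.sin ((2*(j:ℕ)+2) * ((2*(k:ℕ)+1) * hh n))
noncomputable def Vmat (n : ℕ) : Matrix (Fin n) (Fin n) ℝ :=
  Matrix.of fun j k => Real.cos ((2*(j:ℕ)+1) * ((2*(k:ℕ)+1) * hh n))
noncomputable def Wmat (n : ℕ) : Matrix (Fin n) (Fin n) ℝ :=
  (4/(2*(n:ℝ)+1)) • (Vmat n * (Umat n)ᵀ)


lemma UUt_mat (n : ℕ) : Umat n * (Umat n)ᵀ = ((2*(n:ℝ)+1)/4) • (1 : Matrix (Fin n) (Fin n) ℝ) := by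
  ext i j
  simp only [Matrix.mul_apply, Matrix.transpose_apply, Matrix.smul_apply, Matrix.one_apply,
    Umat, Matrix.of_apply, smul_eq_mul]
  rw [UUt n i j]
  split <;> simp

lemma VVt_mat (n : ℕ) : Vmat n * (Vmat n)ᵀ = ((2*(n:ℝ)+1)/4) • (1 : Matrix (Fin n) (Fin n) ℝ) := by
  ext i j
  simp only [Matrix.mul_apply, Matrix.transpose_apply, Matrix.smul_apply, Matrix.one_apply,
    Vmat, Matrix.of_apply, smul_eq_mul]
  rw [VVt n i j]
  split <;> simp

lemma VtV_mat (n : ℕ) : (Vmat n)ᵀ * Vmat n = ((2*(n:ℝ)+1)/4) • (1 : Matrix (Fin n) (Fin n) ℝ) := by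
  set d : ℝ := (2*(n:ℝ)+1)/4 with hd
  have hd0 : d ≠ 0 := by rw [hd]; positivity
  have h1 : Vmat n * (d⁻¹ • (Vmat n)ᵀ) = 1 := by
    rw [Matrix.mul_smul, VVt_mat, smul_smul, inv_mul_cancel₀ hd0, one_smul]
  have h2 : (d⁻¹ • (Vmat n)ᵀ) * Vmat n = 1 := mul_eq_one_comm.mp h1
  calc (Vmat n)ᵀ * Vmat n = d • ((d⁻¹ • (Vmat n)ᵀ) * Vmat n) := by
        rw [Matrix.smul_mul, smul_smul, mul_inv_cancel₀ hd0, one_smul]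
    _ = d • 1 := by rw [h2]

lemma WtW (n : ℕ) : (Wmat n)ᵀ * Wmat n = 1 := by
  have hd0 : ((2*(n:ℝ)+1)/4) ≠ 0 := by positivity
  rw [Wmat, Matrix.transpose_smul, Matrix.transpose_mul, Matrix.transpose_transpose]
  rw [Matrix.smul_mul, Matrix.mul_smul, smul_smul]
  rw [Matrix.mul_assoc, ← Matrix.mul_assoc ((Vmat n)ᵀ), VtV_mat]
  rw [Matrix.smul_mul, Matrix.mul_smul, Matrix.one_mul, UUt_mat, smul_smul, smul_smul]
  rw [show (4/(2*(n:ℝ)+1) * (4/(2*(n:ℝ)+1)) * ((2*(n:ℝ)+1)/4) * ((2*(n:ℝ)+1)/4)) = 1 by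
    field_simp]
  rw [one_smul]

lemma Worth (n : ℕ) (j j' : Fin n) :
    ∑ i : Fin n, Wmat n i j * Wmat n i j' = if j = j' then 1 else 0 := by
  have h := congrFun (congrFun (WtW n) j) j'
  simpa [Matrix.mul_apply, Matrix.transpose_apply, Matrix.one_apply] using h

lemma colsum (n : ℕ) (j k : Fin n) :
    ∑ i : Fin n, (if (i:ℕ) ≤ (j:ℕ) then Real.cos ((2*(i:ℕ)+1) * ((2*(k:ℕ)+1) * hh n)) else 0)
      = Real.sin ((2*(j:ℕ)+2) * ((2*(k:ℕ)+1) * hh n)) / (2 * Real.sin ((2*(k:ℕ)+1) * hh n)) := by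
  set c : ℝ := (2*(k:ℕ)+1) * hh n with hc
  have hs : 0 < Real.sin c := sinpos n k
  have h1 : ∑ i : Fin n, (if (i:ℕ) ≤ (j:ℕ) then Real.cos ((2*(i:ℕ)+1) * c) else 0)
      = ∑ i ∈ Finset.range ((j:ℕ)+1), Real.cos ((2*(i:ℝ)+1) * c) := by
    rw [Fin.sum_univ_eq_sum_range (fun i : ℕ => if i ≤ (j:ℕ) then Real.cos ((2*(i:ℝ)+1) * c) else 0)]
    rw [← Finset.sum_filter]
    congr 1
    ext x
    simp only [Finset.mem_filter, Finset.mem_range]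
    constructor
    · rintro ⟨_, h⟩; omega
    · intro h; exact ⟨by omega, by omega⟩
  have h2 := tele c ((j:ℕ)+1)
  rw [← Finset.mul_sum] at h2
  rw [h1]
  rw [eq_div_iff (by positivity)]
  have : Real.sin ((2*(j:ℕ)+2) * c) = Real.sin (2*((j:ℕ)+1:ℕ)*c) := by
    congr 1; push_cast; ring
  rw [this, ← h2]
  ring

lemma traceW (n : ℕ) :
    ∑ i : Fin n, ∑ j : Fin n, (if (i:ℕ) ≤ (j:ℕ) then Wmat n i j else 0)
      = ∑ k : Fin n, 1/(2 * Real.sin ((2*(k:ℕ)+1) * hh n)) := by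
  rw [Finset.sum_comm]
  have hW : ∀ i j : Fin n, Wmat n i j
      = (4/(2*(n:ℝ)+1)) * ∑ k : Fin n, Real.cos ((2*(i:ℕ)+1) * ((2*(k:ℕ)+1) * hh n)) *
          Real.sin ((2*(j:ℕ)+2) * ((2*(k:ℕ)+1) * hh n)) := by
    intro i j
    simp [Wmat, Matrix.mul_apply, Matrix.smul_apply, Umat, Vmat, smul_eq_mul]
  have step1 : ∀ j : Fin n, ∑ i : Fin n, (if (i:ℕ) ≤ (j:ℕ) then Wmat n i j else 0)
      = (4/(2*(n:ℝ)+1)) * ∑ k : Fin n,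
          (Real.sin ((2*(j:ℕ)+2) * ((2*(k:ℕ)+1) * hh n)))^2 / (2 * Real.sin ((2*(k:ℕ)+1) * hh n)) := by
    intro j
    have : ∀ i : Fin n, (if (i:ℕ) ≤ (j:ℕ) then Wmat n i j else 0)
        = (4/(2*(n:ℝ)+1)) * ∑ k : Fin n,
            (if (i:ℕ) ≤ (j:ℕ) then Real.cos ((2*(i:ℕ)+1) * ((2*(k:ℕ)+1) * hh n)) else 0) *
              Real.sin ((2*(j:ℕ)+2) * ((2*(k:ℕ)+1) * hh n)) := by
      intro i
      by_cases h : (i:ℕ) ≤ (j:ℕ)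
      · simp only [if_pos h, hW i j]
      · simp only [if_neg h, zero_mul, Finset.sum_const_zero, mul_zero]
    rw [Finset.sum_congr rfl (fun i _ => this i)]
    rw [← Finset.mul_sum, Finset.sum_comm]
    congr 1
    refine Finset.sum_congr rfl (fun k _ => ?_)
    rw [← Finset.sum_mul, colsum n j k]
    rw [div_mul_eq_mul_div, sq]
  rw [Finset.sum_congr rfl (fun j _ => step1 j)]
  rw [← Finset.mul_sum, Finset.sum_comm]
  have : ∀ k : Fin n, ∑ j : Fin n,
      (Real.sin ((2*(j:ℕ)+2) * ((2*(k:ℕ)+1) * hh n)))^2 / (2 * Real.sin ((2*(k:ℕ)+1) * hh n))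
      = ((2*(n:ℝ)+1)/4) * (1/(2 * Real.sin ((2*(k:ℕ)+1) * hh n))) := by
    intro k
    rw [← Finset.sum_div, Ucol n k]
    ring
  rw [Finset.sum_congr rfl (fun k _ => this k), ← Finset.mul_sum, ← mul_assoc]
  rw [show (4/(2*(n:ℝ)+1)) * ((2*(n:ℝ)+1)/4) = 1 by field_simp]
  rw [one_mul]

lemma sum_norm_sq_eq {ι : Type*} [Fintype ι] (x : ι → ℂ) :
    ∑ i, ‖x i‖^2 = (∑ i, x i * (starRingEnd ℂ) (x i)).re := by
  rw [Complex.re_sum]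
  refine Finset.sum_congr rfl fun i _ => ?_
  rw [Complex.mul_conj, Complex.ofReal_re, ← Complex.sq_norm]

lemma iso (n m : ℕ) (B : Matrix (Fin n) (Fin m) ℂ) (l : Fin m) :
    ∑ i : Fin n, ‖∑ j : Fin n, ((Wmat n i j : ℝ):ℂ) * B j l‖^2 = ∑ j : Fin n, ‖B j l‖^2 := by
  rw [sum_norm_sq_eq, sum_norm_sq_eq]
  congr 1
  calc ∑ i : Fin n, (∑ j : Fin n, ((Wmat n i j : ℝ):ℂ) * B j l) *
          (starRingEnd ℂ) (∑ j' : Fin n, ((Wmat n i j' : ℝ):ℂ) * B j' l)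
      = ∑ i : Fin n, ∑ j : Fin n, ∑ j' : Fin n,
          (((Wmat n i j : ℝ):ℂ) * B j l) * (((Wmat n i j' : ℝ):ℂ) * (starRingEnd ℂ) (B j' l)) := by
        refine Finset.sum_congr rfl fun i _ => ?_
        rw [map_sum, Finset.sum_mul_sum]
        refine Finset.sum_congr rfl fun j _ => Finset.sum_congr rfl fun j' _ => ?_
        rw [_root_.map_mul, Complex.conj_ofReal]
    _ = ∑ j : Fin n, ∑ j' : Fin n, (B j l * (starRingEnd ℂ) (B j' l)) *
          ((∑ i : Fin n, Wmat n i j * Wmat n i j' : ℝ) : ℂ) := by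
        rw [Finset.sum_comm]
        refine Finset.sum_congr rfl fun j _ => ?_
        rw [Finset.sum_comm]
        refine Finset.sum_congr rfl fun j' _ => ?_
        push_cast
        rw [Finset.mul_sum]
        refine Finset.sum_congr rfl fun i _ => ?_
        ring
    _ = ∑ j : Fin n, B j l * (starRingEnd ℂ) (B j l) := by
        refine Finset.sum_congr rfl fun j _ => ?_
        have : ∀ j' : Fin n, (B j l * (starRingEnd ℂ) (B j' l)) *
            ((∑ i : Fin n, Wmat n i j * Wmat n i j' : ℝ) : ℂ)
            = (B j l * (starRingEnd ℂ) (B j' l)) * (if j = j' then 1 else 0) := by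
          intro j'
          rw [Worth n j j']
          split <;> simp
        rw [Finset.sum_congr rfl fun j' _ => this j']
        simp [Finset.sum_ite_eq]

theorem stmt_19 (n : ℕ) (hn : 1 ≤ n) (p : ℝ) (hp : 2 ≤ p)
    (Mcount : Matrix (Fin n) (Fin n) ℂ)
    (hM : ∀ i j : Fin n, Mcount i j = if j ≤ i then 1 else 0) :
    gammap p Mcount ≥
      (n : ℝ) ^ (1 / p - 1) *
        ((1 / 2) * ∑ i ∈ Finset.Icc 1 n,
          |1 / Real.sin ((2 * i - 1) * Real.pi / (4 * n + 2))|) := by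
  have hn0 : (0:ℝ) < n := by exact_mod_cast hn
  have hp0 : (0:ℝ) < p := by linarith
  set S : ℝ := ∑ k : Fin n, 1/(2 * Real.sin ((2*(k:ℕ)+1) * hh n)) with hSdef
  -- RHS rewrite
  have hRHS : (1 / 2) * ∑ i ∈ Finset.Icc 1 n,
      |1 / Real.sin ((2 * i - 1) * Real.pi / (4 * n + 2))| = S := by
    have himg : Finset.Icc 1 n = (Finset.range n).image (· + 1) := by
      ext x
      simp only [Finset.mem_Icc, Finset.mem_image, Finset.mem_range]
      constructor
      · rintro ⟨h1, h2⟩; exact ⟨x-1, by omega, by omega⟩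
      · rintro ⟨a, ha, rfl⟩; omega
    rw [himg, Finset.sum_image (by intro x _ y _ h; simp only at h; omega)]
    rw [hSdef, Fin.sum_univ_eq_sum_range (fun k => 1/(2 * Real.sin ((2*(k:ℕ)+1) * hh n)))]
    rw [Finset.mul_sum]
    refine Finset.sum_congr rfl fun k hk => ?_
    have hk' : k < n := Finset.mem_range.mp hk
    have hang : (2 * ((k:ℝ)+1) - 1) * Real.pi / (4 * n + 2)
        = (2*(k:ℝ)+1) * hh n := by
      unfold hh; push_cast; field_simp; ring
    have hs : 0 < Real.sin ((2*(k:ℝ)+1) * hh n) := by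
      have := sinpos n ⟨k, hk'⟩
      simpa using this
    push_cast
    rw [hang]
    rw [abs_of_pos (by positivity)]
    rw [div_mul_div_comm]
    norm_num
  rw [hRHS, ge_iff_le, gammap]
  refine le_csInf ⟨_, n, Mcount, 1, Matrix.mul_one _, rfl⟩ ?_
  rintro r ⟨m, B, C, hBC, rfl⟩
  -- definitions
  set w : Fin n → Fin n → ℂ := fun i j => ((Wmat n i j : ℝ):ℂ) with hw
  set XB : Fin n → Fin m → ℂ := fun i l => ∑ j, w i j * B j l with hXB
  set T : ℂ := ∑ i : Fin n, ∑ l : Fin m, XB i l * C l i with hT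
  set a : Fin n → ℝ := fun i => ((B * B.conjTranspose) i i).re with ha
  have ha' : ∀ i, a i = ∑ l, ‖B i l‖^2 := by
    intro i
    show ((B * B.conjTranspose) i i).re = _
    rw [show (B * B.conjTranspose) i i = ∑ l, B i l * (starRingEnd ℂ) (B i l) from by
      simp [Matrix.mul_apply, Matrix.conjTranspose_apply], ← sum_norm_sq_eq]
  have ha0 : ∀ i, 0 ≤ a i := fun i => by
    rw [ha' i]; positivity
  set A : ℝ := ∑ i, a i ^ (p/2) with hA
  have hA0 : 0 ≤ A := Finset.sum_nonneg fun i _ => Real.rpow_nonneg (ha0 i) _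
  set FB : ℝ := ∑ i, a i with hFB
  set FC : ℝ := ∑ i : Fin n, ∑ l : Fin m, ‖C l i‖^2 with hFC
  have hFB0 : 0 ≤ FB := Finset.sum_nonneg fun i _ => ha0 i
  have hFC0 : 0 ≤ FC := by positivity
  -- colNorm facts
  have hbdd : BddAbove (Set.range fun j : Fin n => Real.sqrt (∑ i : Fin m, ‖C i j‖^2)) :=
    Set.Finite.bddAbove (Set.finite_range _)
  have hcol : ∀ j : Fin n, Real.sqrt (∑ i : Fin m, ‖C i j‖^2) ≤ colNorm C := fun j =>
    le_ciSup hbdd j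
  have hcol0 : 0 ≤ colNorm C :=
    le_trans (Real.sqrt_nonneg _) (hcol ⟨0, by omega⟩)
  have hFCb : FC ≤ n * (colNorm C)^2 := by
    rw [hFC]
    calc ∑ i : Fin n, ∑ l : Fin m, ‖C l i‖^2 ≤ ∑ _i : Fin n, (colNorm C)^2 := by
          refine Finset.sum_le_sum fun i _ => ?_
          have h1 := hcol i
          have h2 : (0:ℝ) ≤ ∑ l : Fin m, ‖C l i‖^2 := by positivity
          nlinarith [Real.sq_sqrt h2, Real.sqrt_nonneg (∑ l : Fin m, ‖C l i‖^2)]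
      _ = n * (colNorm C)^2 := by simp [Finset.sum_const, mul_comm]
  -- trace identity
  have hMC : ∀ j i : Fin n, (∑ l, B j l * C l i) = Mcount j i := fun j i => by
    rw [← hBC]; simp [Matrix.mul_apply]
  have hTS : T = (S:ℂ) := by
    rw [hT]
    calc ∑ i : Fin n, ∑ l : Fin m, XB i l * C l i
        = ∑ i : Fin n, ∑ j : Fin n, w i j * (∑ l, B j l * C l i) := by
          refine Finset.sum_congr rfl fun i _ => ?_
          rw [hXB]
          simp_rw [Finset.sum_mul, Finset.mul_sum, mul_assoc]
          exact Finset.sum_comm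
      _ = ∑ i : Fin n, ∑ j : Fin n, w i j * Mcount j i := by
          refine Finset.sum_congr rfl fun i _ => Finset.sum_congr rfl fun j _ => by rw [hMC]
      _ = ((∑ i : Fin n, ∑ j : Fin n, (if (i:ℕ) ≤ (j:ℕ) then Wmat n i j else 0) : ℝ) : ℂ) := by
          rw [Complex.ofReal_sum]
          refine Finset.sum_congr rfl fun i _ => ?_
          rw [Complex.ofReal_sum]
          refine Finset.sum_congr rfl fun j _ => ?_
          rw [hM j i, hw]
          by_cases h : (i:ℕ) ≤ (j:ℕ)
          · rw [if_pos (by exact_mod_cast h : i ≤ j), if_pos h, mul_one]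
          · rw [if_neg (by simpa using h : ¬ i ≤ j), if_neg h, mul_zero, Complex.ofReal_zero]
      _ = (S:ℂ) := by rw [traceW n, hSdef]
  -- Cauchy-Schwarz
  have hFX : ∑ i : Fin n, ∑ l : Fin m, ‖XB i l‖^2 = FB := by
    rw [Finset.sum_comm]
    have : ∀ l : Fin m, ∑ i : Fin n, ‖XB i l‖^2 = ∑ j : Fin n, ‖B j l‖^2 := fun l => iso n m B l
    rw [Finset.sum_congr rfl fun l _ => this l, Finset.sum_comm, hFB]
    exact Finset.sum_congr rfl fun i _ => (ha' i).symm
  have habs : ‖T‖ ≤ Real.sqrt FB * Real.sqrt FC := by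
    have h1 : ‖T‖ ≤ ∑ i : Fin n, ∑ l : Fin m, ‖XB i l‖ * ‖C l i‖ := by
      rw [hT]
      calc ‖∑ i : Fin n, ∑ l : Fin m, XB i l * C l i‖
          ≤ ∑ i : Fin n, ‖∑ l : Fin m, XB i l * C l i‖ := norm_sum_le _ _
        _ ≤ ∑ i : Fin n, ∑ l : Fin m, ‖XB i l * C l i‖ :=
            Finset.sum_le_sum fun i _ => norm_sum_le _ _
        _ = ∑ i : Fin n, ∑ l : Fin m, ‖XB i l‖ * ‖C l i‖ := by simp [norm_mul]
    have h2 := Real.sum_mul_le_sqrt_mul_sqrt (Finset.univ : Finset (Fin n × Fin m))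
      (fun q => ‖XB q.1 q.2‖) (fun q => ‖C q.2 q.1‖)
    rw [Fintype.sum_prod_type] at h2
    simp_rw [Fintype.sum_prod_type (f := fun q : Fin n × Fin m => ‖XB q.1 q.2‖^2)] at h2
    rw [Fintype.sum_prod_type (f := fun q : Fin n × Fin m => ‖C q.2 q.1‖^2)] at h2
    rw [hFX] at h2
    rw [← hFC] at h2
    exact le_trans h1 h2
  -- Hölder on B side
  have holder : Real.sqrt FB ≤ (n:ℝ)^((1:ℝ)/2 - 1/p) * A^((1:ℝ)/p) := by
    have hq : 1 ≤ p/2 := by linarith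
    have hn0' : (n:ℝ) ≠ 0 := hn0.ne'
    have hsum1 : ∑ _i : Fin n, 1/(n:ℝ) = 1 := by
      rw [Finset.sum_const, Finset.card_univ, Fintype.card_fin, nsmul_eq_mul]
      field_simp
    have hmean := Real.arith_mean_le_rpow_mean (Finset.univ : Finset (Fin n))
      (fun _ => 1/(n:ℝ)) a (fun i _ => by positivity)
      hsum1 (fun i _ => ha0 i) hq
    rw [one_div_div] at hmean
    rw [← Finset.mul_sum, ← Finset.mul_sum] at hmean
    rw [← hFB, ← hA] at hmean
    have h3 : FB ≤ (n:ℝ) * (((1/(n:ℝ))*A)^((2:ℝ)/p)) := by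
      have h4 := mul_le_mul_of_nonneg_left hmean hn0.le
      calc FB = (n:ℝ) * ((1/(n:ℝ))*FB) := by field_simp
        _ ≤ (n:ℝ) * (((1/(n:ℝ))*A)^((2:ℝ)/p)) := h4
    have key : (n:ℝ) * (((1/(n:ℝ))*A)^((2:ℝ)/p))
        = ((n:ℝ)^((1:ℝ)/2 - 1/p) * A^((1:ℝ)/p))^2 := by
      rw [show ((1/(n:ℝ))*A) = A * ((n:ℝ))⁻¹ by ring]
      rw [Real.mul_rpow hA0 (by positivity)]
      rw [Real.inv_rpow hn0.le]
      rw [mul_pow, ← Real.rpow_natCast ((n:ℝ)^((1:ℝ)/2 - 1/p)) 2,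
        ← Real.rpow_natCast (A^((1:ℝ)/p)) 2]
      rw [← Real.rpow_mul hn0.le, ← Real.rpow_mul hA0]
      push_cast
      rw [show ((1:ℝ)/2 - 1/p) * 2 = 1 + (-((2:ℝ)/p)) by ring,
        show ((1:ℝ)/p) * 2 = 2/p by ring]
      rw [Real.rpow_add hn0, Real.rpow_one, Real.rpow_neg hn0.le]
      ring
    calc Real.sqrt FB ≤ Real.sqrt ((n:ℝ) * (((1/(n:ℝ))*A)^((2:ℝ)/p))) := Real.sqrt_le_sqrt h3
      _ = (n:ℝ)^((1:ℝ)/2 - 1/p) * A^((1:ℝ)/p) := by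
          rw [key, Real.sqrt_sq (mul_nonneg (Real.rpow_nonneg hn0.le _) (Real.rpow_nonneg hA0 _))]
  -- final chain
  have hchain : S ≤ (n:ℝ)^(1 - 1/p) * (trp p B * colNorm C) := by
    have h1 : S ≤ ‖T‖ := by
      have : S = T.re := by rw [hTS]; simp
      rw [this]
      exact le_trans (le_abs_self _) (Complex.abs_re_le_norm T)
    have h2 : Real.sqrt FC ≤ Real.sqrt (n:ℝ) * colNorm C := by
      calc Real.sqrt FC ≤ Real.sqrt ((n:ℝ) * (colNorm C)^2) := Real.sqrt_le_sqrt hFCb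
        _ = Real.sqrt (n:ℝ) * colNorm C := by
            rw [Real.sqrt_mul hn0.le, Real.sqrt_sq hcol0]
    have htrp : trp p B = A^((1:ℝ)/p) := by
      show (∑ i, ((B * B.conjTranspose) i i).re ^ (p / 2)) ^ (1 / p) = A^((1:ℝ)/p)
      rw [hA]
    calc S ≤ ‖T‖ := h1
      _ ≤ Real.sqrt FB * Real.sqrt FC := habs
      _ ≤ ((n:ℝ)^((1:ℝ)/2 - 1/p) * A^((1:ℝ)/p)) * (Real.sqrt (n:ℝ) * colNorm C) := by
          exact mul_le_mul holder h2 (Real.sqrt_nonneg _)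
            (mul_nonneg (Real.rpow_nonneg hn0.le _) (Real.rpow_nonneg hA0 _))
      _ = (n:ℝ)^(1 - 1/p) * (trp p B * colNorm C) := by
          rw [htrp, Real.sqrt_eq_rpow]
          rw [mul_mul_mul_comm, ← Real.rpow_add hn0]
          rw [show ((1:ℝ)/2 - 1/p + 1/2) = 1 - 1/p by ring]
  calc (n:ℝ)^(1/p - 1) * S ≤ (n:ℝ)^(1/p - 1) * ((n:ℝ)^(1 - 1/p) * (trp p B * colNorm C)) := by
        apply mul_le_mul_of_nonneg_left hchain (Real.rpow_nonneg hn0.le _)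
    _ = ((n:ℝ)^(1/p - 1) * (n:ℝ)^(1 - 1/p)) * (trp p B * colNorm C) := by ring
    _ = trp p B * colNorm C := by
        rw [← Real.rpow_add hn0]
        rw [show (1/p - 1 + (1 - 1/p) : ℝ) = 0 by ring, Real.rpow_zero, one_mul]

end Aux
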